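/- arXiv:2603.25675 — 2 statements merged into one kernel-verified Lean document; each statement's English description precedes it below -/
import Mathlib

section
/- In the setting of semi-discrete optimal transport on a compact metric space (X,d), with μ = Σ_{j=1}^n α_j δ_{y^j} atomic (distinct atoms, positive weights α_j summing to 1), ν ∈ P(X), dual maximizer ψ ∈ ℝⁿ, Laguerre cells A_j and tie sets Σ_j, and an optimal coupling π ∈ Γ₀(ν,μ): for each j, the restriction of π to L_j := (A_j \ Σ_j) × X equals ν|_{A_j \ Σ_j} ⊗ δ_{y^j}. Consequently, ∫_{L_j} d²(x,y) dπ(x,y) = ∫_{A_j \ Σ_j} d²(x, y^j) dν(x). -/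
/-!
Write `ρ k` for the part of `ν` that a coupling sends to the atom `y k`. The cost of the coupling
exceeds the dual value `dualFun y α ν ψ` by `∑ k, ∫ lagGap y ψ k ∂ρ k`, a sum of nonnegative
terms that vanishes exactly when every `ρ k` is carried by its Laguerre cell `A_k`.

Maximality of `ψ` says that raising `ψ` on a set `I` of indices cannot increase the dual value;
differentiating at `0` gives Hall's condition `∑ k ∈ I, α k ≤ ν (⋃ k ∈ I, A_k)`. The supply–demand
form of Hall's theorem, applied to the Venn atoms of the cells, then produces a coupling whose
pieces live on their cells, so the minimal cost equals the dual value. Hence the optimal `π` has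
zero excess, and since `A_j \ Σ_j` meets no other cell, only the piece sent to `y j` charges it.
-/

open MeasureTheory

/-- `π` is a coupling of `ν` and `μ`. -/
def IsCoupling {X : Type*} [MeasurableSpace X]
    (π : Measure (X × X)) (ν μ : Measure X) : Prop :=
  π.map Prod.fst = ν ∧ π.map Prod.snd = μ

/-- `π` is an optimal coupling of `ν` and `μ` for the squared-distance cost. -/
def IsOptimalCoupling {X : Type*} [MetricSpace X] [MeasurableSpace X]
    (π : Measure (X × X)) (ν μ : Measure X) : Prop :=
  IsCoupling π ν μ ∧ ∀ π' : Measure (X × X), IsCoupling π' ν μ →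
    (∫ p : X × X, dist p.1 p.2 ^ 2 ∂π) ≤ ∫ p : X × X, dist p.1 p.2 ^ 2 ∂π'

/-- The c-transform `ψ^c(x) = min_j ( d²(x, y^j) - ψ^j )`. -/
noncomputable def psiC {X : Type*} [MetricSpace X] {n : ℕ}
    (y : Fin n → X) (ψ : Fin n → ℝ) (x : X) : ℝ :=
  ⨅ j, (dist x (y j) ^ 2 - ψ j)

/-- The Kantorovich dual functional for semi-discrete optimal transport. -/
noncomputable def dualFun {X : Type*} [MetricSpace X] [MeasurableSpace X] {n : ℕ}
    (y : Fin n → X) (α : Fin n → ℝ) (ν : Measure X) (ψ : Fin n → ℝ) : ℝ :=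
  (∫ x, psiC y ψ x ∂ν) + ∑ j, α j * ψ j

/-- The Laguerre cell `A_j`. -/
def Lag {X : Type*} [MetricSpace X] {n : ℕ}
    (y : Fin n → X) (ψ : Fin n → ℝ) (j : Fin n) : Set X :=
  {x | ∀ i, i ≠ j → dist x (y j) ^ 2 - ψ j ≤ dist x (y i) ^ 2 - ψ i}

/-- The tie set `Σ_j = ∪_{i ≠ j} (A_j ∩ A_i)`. -/
def TieSet {X : Type*} [MetricSpace X] {n : ℕ}
    (y : Fin n → X) (ψ : Fin n → ℝ) (j : Fin n) : Set X :=
  ⋃ i ∈ {i : Fin n | i ≠ j}, (Lag y ψ j ∩ Lag y ψ i)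

open Finset Filter Topology

section Transport

variable {S D : Type*} [Fintype S] [Fintype D]

def IsSubTransport (E : S → D → Prop) (s : S → ℝ) (a : D → ℝ) (f : S → D → ℝ) : Prop :=
  (∀ P i, 0 ≤ f P i) ∧ (∀ P i, ¬ E P i → f P i = 0) ∧
    (∀ P, ∑ i, f P i ≤ s P) ∧ (∀ i, ∑ P, f P i ≤ a i)

def totalMass (f : S → D → ℝ) : ℝ := ∑ P, ∑ i, f P i

inductive AltReachable (E : S → D → Prop) (f : S → D → ℝ) (i₀ : D) : D → Prop
  | refl : AltReachable E f i₀ i₀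
  | tail {i i' : D} (P : S) : AltReachable E f i₀ i → E P i → 0 < f P i' → AltReachable E f i₀ i'

variable {E : S → D → Prop} {s : S → ℝ} {a : D → ℝ} {f g : S → D → ℝ}

section UnitFlow

variable [DecidableEq S] [DecidableEq D]

def unitFlow (P : S) (i : D) (δ : ℝ) : S → D → ℝ := fun Q u => if Q = P ∧ u = i then δ else 0

omit [Fintype S] [Fintype D] in
lemma unitFlow_apply (P Q : S) (i u : D) (δ : ℝ) :
    unitFlow P i δ Q u = if Q = P ∧ u = i then δ else 0 := rfl

omit [Fintype S] [Fintype D] in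
lemma add_unitFlow_apply_of_ne (g : S → D → ℝ) {P Q : S} {i u : D} (δ : ℝ)
    (h : ¬ (Q = P ∧ u = i)) : (g + unitFlow P i δ) Q u = g Q u := by
  simp [unitFlow_apply, h]

omit [Fintype S] in
lemma sum_add_unitFlow_row (g : S → D → ℝ) (P Q : S) (i : D) (δ : ℝ) :
    ∑ u, (g + unitFlow P i δ) Q u = ∑ u, g Q u + if Q = P then δ else 0 := by
  simp [unitFlow, ite_and, sum_add_distrib]

omit [Fintype D] in
lemma sum_add_unitFlow_col (g : S → D → ℝ) (P : S) (i u : D) (δ : ℝ) :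
    ∑ Q, (g + unitFlow P i δ) Q u = ∑ Q, g Q u + if u = i then δ else 0 := by
  simp [unitFlow, ite_and, sum_add_distrib]

lemma totalMass_add_unitFlow (g : S → D → ℝ) (P : S) (i : D) (δ : ℝ) :
    totalMass (g + unitFlow P i δ) = totalMass g + δ := by
  simp [totalMass, unitFlow, ite_and, sum_add_distrib]

omit [Fintype S] [Fintype D] in
lemma reroute_apply_self (g : S → D → ℝ) {P P' : S} (hPP' : P ≠ P') (i : D) (δ : ℝ) :
    (g + unitFlow P i δ + unitFlow P' i (-δ)) P' i = g P' i - δ := by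
  simp [unitFlow_apply, hPP'.symm, sub_eq_add_neg]

omit [Fintype S] [Fintype D] in
lemma le_reroute_apply (g : S → D → ℝ) (P : S) {P' Q : S} {i u : D} {δ : ℝ} (hδ : 0 ≤ δ)
    (h : ¬ (Q = P' ∧ u = i)) : g Q u ≤ (g + unitFlow P i δ + unitFlow P' i (-δ)) Q u := by
  rw [add_unitFlow_apply_of_ne _ _ h, Pi.add_apply, Pi.add_apply, unitFlow_apply]
  split_ifs <;> linarith

end UnitFlow

lemma IsSubTransport.exists_totalMass_lt (hg : IsSubTransport E s a g) {P : S} {i : D}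
    (hE : E P i) (hP : ∑ u, g P u < s P) (hi : ∑ Q, g Q i < a i) :
    ∃ g', IsSubTransport E s a g' ∧ totalMass g < totalMass g' := by
  classical
  obtain ⟨hg0, hgE, hrow, hcol⟩ := hg
  obtain ⟨δ, hδ, hδ'⟩ := exists_between (lt_min (sub_pos.2 hP) (sub_pos.2 hi))
  obtain ⟨hδP, hδi⟩ := lt_min_iff.1 hδ'
  refine ⟨g + unitFlow P i δ, ⟨fun Q u => ?_, fun Q u hQu => ?_, fun Q => ?_, fun u => ?_⟩, ?_⟩
  · simp only [Pi.add_apply, unitFlow_apply]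
    have := hg0 Q u
    split_ifs <;> linarith
  · have h : ¬ (Q = P ∧ u = i) := fun h => hQu (h.1 ▸ h.2 ▸ hE)
    rw [add_unitFlow_apply_of_ne _ _ h, hgE Q u hQu]
  · rw [sum_add_unitFlow_row]
    have := hrow Q
    split_ifs with h
    · subst h; linarith
    · linarith
  · rw [sum_add_unitFlow_col]
    have := hcol u
    split_ifs with h
    · subst h; linarith
    · linarith
  · rw [totalMass_add_unitFlow]; linarith

lemma IsSubTransport.reroute [DecidableEq S] [DecidableEq D] (hg : IsSubTransport E s a g)
    {P P' : S} {i : D} {δ : ℝ} (hPP' : P ≠ P') (hE : E P i) (hδ : 0 < δ)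
    (hδP : δ ≤ s P - ∑ u, g P u) (hδP' : δ ≤ g P' i) :
    IsSubTransport E s a (g + unitFlow P i δ + unitFlow P' i (-δ)) := by
  obtain ⟨hg0, hgE, hrow, hcol⟩ := hg
  have hE' : E P' i := by_contra fun h => (hgE P' i h ▸ hδP').not_gt hδ
  refine ⟨fun Q u => ?_, fun Q u hQu => ?_, fun Q => ?_, fun u => ?_⟩
  · by_cases h : Q = P' ∧ u = i
    · obtain ⟨rfl, rfl⟩ := h
      rw [reroute_apply_self _ hPP']; linarith
    · exact (hg0 Q u).trans (le_reroute_apply g P hδ.le h)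
  · have h : ¬ (Q = P ∧ u = i) := fun h => hQu (h.1 ▸ h.2 ▸ hE)
    have h' : ¬ (Q = P' ∧ u = i) := fun h => hQu (h.1 ▸ h.2 ▸ hE')
    rw [add_unitFlow_apply_of_ne _ _ h', add_unitFlow_apply_of_ne _ _ h, hgE Q u hQu]
  · rw [sum_add_unitFlow_row, sum_add_unitFlow_row]
    have := hrow Q
    rcases eq_or_ne Q P with rfl | h
    · simp only [if_true, if_neg hPP']; linarith
    · simp only [if_neg h]; split_ifs <;> linarith
  · rw [sum_add_unitFlow_col, sum_add_unitFlow_col]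
    have := hcol u
    split_ifs <;> linarith

/-- The witness shifts a little of the flow `P' → i` onto `P`. -/
lemma IsSubTransport.exists_reroute (hg : IsSubTransport E s a g) {P P' : S} {i : D}
    (hPP' : P ≠ P') (hE : E P i) (hP : ∑ u, g P u < s P) (hP' : 0 < g P' i) :
    ∃ g', IsSubTransport E s a g' ∧ totalMass g' = totalMass g ∧
      (∀ u, ∑ Q, g' Q u = ∑ Q, g Q u) ∧ (∀ Q u, 0 < g Q u → 0 < g' Q u) ∧
      ∑ u, g' P' u < s P' := by
  classical
  obtain ⟨δ, hδ, hδ'⟩ := exists_between (lt_min (sub_pos.2 hP) hP')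
  obtain ⟨hδP, hδP'⟩ := lt_min_iff.1 hδ'
  refine ⟨_, hg.reroute hPP' hE hδ hδP.le hδP'.le, ?_, fun u => ?_, fun Q u hQu => ?_, ?_⟩
  · rw [totalMass_add_unitFlow, totalMass_add_unitFlow]; ring
  · rw [sum_add_unitFlow_col, sum_add_unitFlow_col]; split_ifs <;> ring
  · by_cases h : Q = P' ∧ u = i
    · obtain ⟨rfl, rfl⟩ := h
      rw [reroute_apply_self _ hPP']; linarith
    · exact hQu.trans_le (le_reroute_apply g P hδ.le h)
  · rw [sum_add_unitFlow_row, sum_add_unitFlow_row, if_neg hPP'.symm, if_pos rfl]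
    linarith [hg.2.2.1 P']

lemma AltReachable.exists_totalMass_lt {i₀ i : D} (h : AltReachable E f i₀ i) :
    ∀ g, IsSubTransport E s a g → (∀ P u, 0 < f P u → 0 < g P u) →
      ∑ P, g P i₀ < a i₀ → ∀ P, E P i → ∑ u, g P u < s P →
      ∃ g', IsSubTransport E s a g' ∧ totalMass g < totalMass g' := by
  induction h with
  | refl => exact fun g hg _ hi₀ P hE hP => hg.exists_totalMass_lt hE hP hi₀
  | @tail i i' P' _ hE' hf ih =>
    intro g hg hfg hi₀ P hE hP
    rcases eq_or_ne P P' with rfl | hPP'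
    · exact ih g hg hfg hi₀ P hE' hP
    obtain ⟨g', hg', hmass, hcol, hpos, hP'⟩ := hg.exists_reroute hPP' hE hP (hfg P' i' hf)
    rw [← hmass]
    exact ih g' hg' (fun Q u h => hpos Q u (hfg Q u h)) (hcol i₀ ▸ hi₀) P' hE' hP'

lemma isCompact_setOf_isSubTransport : IsCompact {f : S → D → ℝ | IsSubTransport E s a f} := by
  have hclosed : IsClosed {f : S → D → ℝ | IsSubTransport E s a f} := by
    simp only [IsSubTransport, Set.ofPred_and, Set.ofPred_forall]
    refine .inter (isClosed_iInter fun P => isClosed_iInter fun i => ?_) (.inter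
      (isClosed_iInter fun P => isClosed_iInter fun i => isClosed_iInter fun _ => ?_) (.inter
      (isClosed_iInter fun P => ?_) (isClosed_iInter fun i => ?_)))
    · exact isClosed_le continuous_const (by fun_prop)
    · exact isClosed_eq (by fun_prop) continuous_const
    · exact isClosed_le (by fun_prop) continuous_const
    · exact isClosed_le (by fun_prop) continuous_const
  refine (isCompact_univ_pi fun P => isCompact_univ_pi fun _ => isCompact_Icc (a := 0)
    (b := s P)).of_isClosed_subset hclosed fun f hf => ?_
  simp only [Set.mem_pi, Set.mem_univ, Set.mem_Icc, forall_const]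
  exact fun P i => ⟨hf.1 P i,
    (single_le_sum (fun u _ => hf.1 P u) (mem_univ i)).trans (hf.2.2.1 P)⟩

/-- If the demand `i₀` were unsaturated, every supply adjacent to a demand alternately reachable
from `i₀` would be saturated (otherwise augment along the path), and these supplies would violate
Hall's condition for the reachable demands. -/
lemma IsSubTransport.colSum_eq_of_isMaxOn (hf : IsSubTransport E s a f)
    (hmax : ∀ g, IsSubTransport E s a g → totalMass g ≤ totalMass f)
    (hall : ∀ (I : Finset D) (Q : Finset S), (∀ P i, i ∈ I → E P i → P ∈ Q) →
      ∑ i ∈ I, a i ≤ ∑ P ∈ Q, s P) (i₀ : D) :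
    ∑ P, f P i₀ = a i₀ := by
  classical
  refine (hf.2.2.2 i₀).eq_of_not_lt fun hi₀ => ?_
  set I := univ.filter (AltReachable E f i₀)
  set Q := univ.filter fun P => ∃ i ∈ I, E P i
  have hQ_sat : ∀ P ∈ Q, ∑ u, f P u = s P := by
    intro P hP
    obtain ⟨i, hi, hE⟩ := (mem_filter.1 hP).2
    refine (hf.2.2.1 P).eq_of_not_lt fun hlt => ?_
    obtain ⟨g, hg, hfg⟩ :=
      (mem_filter.1 hi).2.exists_totalMass_lt f hf (fun _ _ h => h) hi₀ P hE hlt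
    exact (hmax g hg).not_gt hfg
  have hQ_supp : ∀ P ∈ Q, ∀ u ∉ I, f P u = 0 := by
    intro P hP u hu
    obtain ⟨i, hi, hE⟩ := (mem_filter.1 hP).2
    refine (hf.1 P u).eq_of_not_lt' fun hpos => hu ?_
    exact mem_filter.2 ⟨mem_univ u, .tail P (mem_filter.1 hi).2 hE hpos⟩
  have : ∑ P ∈ Q, s P < ∑ i ∈ I, a i := calc
    ∑ P ∈ Q, s P = ∑ P ∈ Q, ∑ u ∈ I, f P u := sum_congr rfl fun P hP => by
      rw [← hQ_sat P hP, sum_subset (subset_univ I) fun u _ hu => hQ_supp P hP u hu]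
    _ = ∑ u ∈ I, ∑ P ∈ Q, f P u := sum_comm
    _ ≤ ∑ u ∈ I, ∑ P, f P u := sum_le_sum fun u _ =>
      sum_le_sum_of_subset_of_nonneg (subset_univ Q) fun P _ _ => hf.1 P u
    _ < ∑ i ∈ I, a i := sum_lt_sum (fun u _ => hf.2.2.2 u)
      ⟨i₀, mem_filter.2 ⟨mem_univ _, .refl⟩, hi₀⟩
  exact this.not_ge (hall I Q fun P i hi hE => mem_filter.2 ⟨mem_univ P, i, hi, hE⟩)

theorem exists_transport_of_hall (E : S → D → Prop) (hs : ∀ P, 0 ≤ s P) (ha : ∀ i, 0 ≤ a i)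
    (htot : ∑ P, s P = ∑ i, a i)
    (hall : ∀ (I : Finset D) (Q : Finset S), (∀ P i, i ∈ I → E P i → P ∈ Q) →
      ∑ i ∈ I, a i ≤ ∑ P ∈ Q, s P) :
    ∃ f : S → D → ℝ, (∀ P i, 0 ≤ f P i) ∧ (∀ P i, ¬ E P i → f P i = 0) ∧
      (∀ P, ∑ i, f P i = s P) ∧ (∀ i, ∑ P, f P i = a i) := by
  have h0 : IsSubTransport E s a 0 := ⟨fun _ _ => le_rfl, fun _ _ _ => rfl, by simpa, by simpa⟩
  have hcont : Continuous (totalMass : (S → D → ℝ) → ℝ) := by unfold totalMass; fun_prop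
  obtain ⟨f, hf, hmax⟩ := isCompact_setOf_isSubTransport.exists_isMaxOn ⟨0, h0⟩ hcont.continuousOn
  have hcol := hf.colSum_eq_of_isMaxOn (fun g hg => hmax hg) hall
  have hrow : ∑ P, ∑ i, f P i = ∑ P, s P := by
    rw [htot, sum_comm]; exact sum_congr rfl fun i _ => hcol i
  exact ⟨f, hf.1, hf.2.1,
    fun P => (sum_eq_sum_iff_of_le fun P _ => hf.2.2.1 P).1 hrow P (mem_univ P), hcol⟩

end Transport

lemma Continuous.integrable_of_compactSpace {X : Type*} [TopologicalSpace X] [CompactSpace X]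
    [MeasurableSpace X] [OpensMeasurableSpace X] {f : X → ℝ} (hf : Continuous f)
    (μ : Measure X) [IsFiniteMeasure μ] : Integrable f μ :=
  hf.integrable_of_hasCompactSupport (HasCompactSupport.of_compactSpace f)

section Laguerre

variable {X : Type*} [MetricSpace X] {n : ℕ} {y : Fin n → X} {ψ : Fin n → ℝ}

lemma Lag_diff_TieSet_subset_compl_Lag {i j : Fin n} (hij : i ≠ j) :
    Lag y ψ j \ TieSet y ψ j ⊆ (Lag y ψ i)ᶜ :=
  fun _ hx hi => hx.2 (Set.mem_biUnion hij ⟨hx.1, hi⟩)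

lemma psiC_le (x : X) (k : Fin n) : psiC y ψ x ≤ dist x (y k) ^ 2 - ψ k :=
  ciInf_le (Set.finite_range _).bddBelow k

noncomputable def lagGap (y : Fin n → X) (ψ : Fin n → ℝ) (k : Fin n) (x : X) : ℝ :=
  dist x (y k) ^ 2 - ψ k - psiC y ψ x

lemma lagGap_nonneg (k : Fin n) (x : X) : 0 ≤ lagGap y ψ k x :=
  sub_nonneg.2 (psiC_le x k)

variable [NeZero n]

lemma mem_Lag_iff {x : X} {k : Fin n} :
    x ∈ Lag y ψ k ↔ psiC y ψ x = dist x (y k) ^ 2 - ψ k := by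
  refine ⟨fun hx => (psiC_le x k).antisymm (le_ciInf fun i => ?_), fun hx i _ => hx ▸ psiC_le x i⟩
  rcases eq_or_ne i k with rfl | hik
  · exact le_rfl
  · exact hx i hik

lemma exists_mem_Lag (x : X) : ∃ k, x ∈ Lag y ψ k := by
  obtain ⟨k, hk⟩ := exists_eq_ciInf_of_finite (f := fun k => dist x (y k) ^ 2 - ψ k)
  exact ⟨k, mem_Lag_iff.2 hk.symm⟩

lemma continuous_psiC : Continuous (psiC y ψ) := by
  have : psiC y ψ = fun x => univ.inf' univ_nonempty fun k => dist x (y k) ^ 2 - ψ k := by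
    funext x; rw [inf'_univ_eq_ciInf]; rfl
  rw [this]
  exact .finset_inf'_apply _ fun k _ => by fun_prop

lemma isClosed_Lag (k : Fin n) : IsClosed (Lag y ψ k) := by
  rw [show Lag y ψ k = {x | psiC y ψ x = dist x (y k) ^ 2 - ψ k} from Set.ext fun _ => mem_Lag_iff]
  exact isClosed_eq continuous_psiC (by fun_prop)

lemma measurableSet_Lag_diff_TieSet [MeasurableSpace X] [OpensMeasurableSpace X] (j : Fin n) :
    MeasurableSet (Lag y ψ j \ TieSet y ψ j) :=
  (isClosed_Lag j).measurableSet.diff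
    ((Set.toFinite _).isClosed_biUnion fun i _ =>
      (isClosed_Lag j).inter (isClosed_Lag i)).measurableSet

lemma lagGap_eq_zero_iff {k : Fin n} {x : X} : lagGap y ψ k x = 0 ↔ x ∈ Lag y ψ k := by
  rw [mem_Lag_iff, lagGap, sub_eq_zero, eq_comm]

lemma continuous_lagGap (k : Fin n) : Continuous (lagGap y ψ k) :=
  (by fun_prop : Continuous fun x => dist x (y k) ^ 2 - ψ k).sub continuous_psiC

end Laguerre

section HallCondition

variable {X : Type*} [MetricSpace X] {n : ℕ} [NeZero n] {y : Fin n → X} {ψ : Fin n → ℝ}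
  {I : Finset (Fin n)}

def raiseOn (I : Finset (Fin n)) (t : ℝ) (ψ : Fin n → ℝ) : Fin n → ℝ :=
  fun k => if k ∈ I then ψ k + t else ψ k

lemma psiC_raiseOn_mem_Icc {t : ℝ} (ht : 0 ≤ t) (x : X) :
    psiC y (raiseOn I t ψ) x ∈ Set.Icc (psiC y ψ x - t) (psiC y ψ x) := by
  refine ⟨le_ciInf fun i => ?_, ciInf_mono (Set.finite_range _).bddBelow fun i => ?_⟩
  · have := psiC_le (y := y) (ψ := ψ) x i
    simp only [raiseOn]; split_ifs <;> linarith
  · simp only [raiseOn]; split_ifs <;> linarith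

lemma psiC_raiseOn_of_mem {x : X} (hx : x ∈ ⋃ k ∈ I, Lag y ψ k) {t : ℝ} (ht : 0 ≤ t) :
    psiC y (raiseOn I t ψ) x = psiC y ψ x - t := by
  obtain ⟨k, hk, hxk⟩ := Set.mem_iUnion₂.1 hx
  refine le_antisymm ?_ (psiC_raiseOn_mem_Icc ht x).1
  calc psiC y (raiseOn I t ψ) x ≤ dist x (y k) ^ 2 - raiseOn I t ψ k := psiC_le x k
    _ = psiC y ψ x - t := by rw [raiseOn, if_pos hk, mem_Lag_iff.1 hxk]; ring

lemma eventually_psiC_raiseOn_eq {x : X} (hx : x ∉ ⋃ k ∈ I, Lag y ψ k) :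
    ∀ᶠ t in 𝓝 0, psiC y (raiseOn I t ψ) x = psiC y ψ x := by
  obtain ⟨m, hm⟩ := exists_mem_Lag (y := y) (ψ := ψ) x
  have hmI : m ∉ I := fun h => hx (Set.mem_biUnion h hm)
  have hgap : ∀ k ∈ I, ∀ᶠ t in 𝓝 0, t < dist x (y k) ^ 2 - ψ k - psiC y ψ x := fun k hk =>
    eventually_lt_nhds <| sub_pos.2 <|
      (psiC_le x k).lt_of_ne fun h => hx (Set.mem_biUnion hk (mem_Lag_iff.2 h))
  filter_upwards [(eventually_all_finset I).2 hgap] with t ht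
  refine le_antisymm ?_ (le_ciInf fun i => ?_)
  · calc psiC y (raiseOn I t ψ) x ≤ dist x (y m) ^ 2 - raiseOn I t ψ m := psiC_le x m
      _ = psiC y ψ x := by rw [raiseOn, if_neg hmI, mem_Lag_iff.1 hm]
  · simp only [raiseOn]
    split_ifs with hi
    · linarith [ht i hi]
    · exact psiC_le x i

lemma tendsto_psiC_raiseOn_slope (x : X) :
    Tendsto (fun t => (psiC y ψ x - psiC y (raiseOn I t ψ) x) / t) (𝓝[>] 0)
      (𝓝 ((⋃ k ∈ I, Lag y ψ k).indicator 1 x)) := by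
  by_cases hx : x ∈ ⋃ k ∈ I, Lag y ψ k
  · rw [Set.indicator_of_mem hx]
    refine tendsto_const_nhds.congr' ?_
    filter_upwards [self_mem_nhdsWithin] with t (ht : 0 < t)
    rw [psiC_raiseOn_of_mem hx ht.le, sub_sub_cancel, div_self ht.ne', Pi.one_apply]
  · rw [Set.indicator_of_notMem hx]
    refine tendsto_const_nhds.congr' ?_
    filter_upwards [nhdsWithin_le_nhds (eventually_psiC_raiseOn_eq hx)] with t ht
    rw [ht, sub_self, zero_div]

omit [NeZero n] in
lemma dualFun_raiseOn [MeasurableSpace X] (α : Fin n → ℝ) (ν : Measure X) (t : ℝ) :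
    dualFun y α ν (raiseOn I t ψ) =
      ∫ x, psiC y (raiseOn I t ψ) x ∂ν + ∑ k, α k * ψ k + t * ∑ k ∈ I, α k := by
  have : ∀ k, α k * raiseOn I t ψ k = α k * ψ k + if k ∈ I then α k * t else 0 := fun k => by
    simp only [raiseOn]; split_ifs <;> ring
  rw [dualFun, sum_congr rfl fun k _ => this k, sum_add_distrib, sum_ite_mem, univ_inter,
    ← sum_mul]
  ring

/-- The first-order optimality condition of the dual problem: the right derivative of the dual
functional in the direction of `I` is `∑ k ∈ I, α k - ν (⋃ k ∈ I, Lag y ψ k)`. -/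
theorem sum_le_measureReal_biUnion_Lag [CompactSpace X] [MeasurableSpace X] [BorelSpace X]
    {α : Fin n → ℝ} {ν : Measure X} [IsFiniteMeasure ν]
    (hmax : ∀ φ, dualFun y α ν φ ≤ dualFun y α ν ψ) (I : Finset (Fin n)) :
    ∑ k ∈ I, α k ≤ ν.real (⋃ k ∈ I, Lag y ψ k) := by
  have hU : MeasurableSet (⋃ k ∈ I, Lag y ψ k) :=
    I.measurableSet_biUnion fun k _ => (isClosed_Lag k).measurableSet
  have hint : ∀ φ, Integrable (psiC y φ) ν := fun φ => continuous_psiC.integrable_of_compactSpace ν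
  have hslope : ∀ t > 0,
      ∑ k ∈ I, α k ≤ ∫ x, (psiC y ψ x - psiC y (raiseOn I t ψ) x) / t ∂ν := by
    intro t ht
    have h := hmax (raiseOn I t ψ)
    rw [dualFun_raiseOn, dualFun] at h
    rw [integral_div, integral_sub (hint ψ) (hint _), le_div_iff₀ ht]
    linarith
  have hlim : Tendsto (fun t => ∫ x, (psiC y ψ x - psiC y (raiseOn I t ψ) x) / t ∂ν) (𝓝[>] 0)
      (𝓝 (ν.real (⋃ k ∈ I, Lag y ψ k))) := by
    rw [← integral_indicator_one hU]
    refine tendsto_integral_filter_of_dominated_convergence (fun _ => 1)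
      (Eventually.of_forall fun t =>
        ((continuous_psiC.sub continuous_psiC).div_const t).aestronglyMeasurable)
      ?_ (integrable_const 1) (ae_of_all _ tendsto_psiC_raiseOn_slope)
    filter_upwards [self_mem_nhdsWithin] with t (ht : 0 < t)
    refine ae_of_all _ fun x => ?_
    obtain ⟨h1, h2⟩ := psiC_raiseOn_mem_Icc (I := I) (y := y) (ψ := ψ) ht.le x
    rw [Real.norm_eq_abs, abs_le, le_div_iff₀ ht, div_le_iff₀ ht]
    constructor <;> linarith
  exact ge_of_tendsto hlim (eventually_nhdsWithin_of_forall hslope)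

end HallCondition

section Splitting

variable {X ι : Type*} [MeasurableSpace X] [Fintype ι]

/-- `ρ k` is the part of `ν` transported to the `k`-th atom of the target. -/
structure IsSplitting (ν : Measure X) (α : ι → ℝ) (ρ : ι → Measure X) : Prop where
  sum_eq : ∑ k, ρ k = ν
  apply_univ : ∀ k, ρ k Set.univ = ENNReal.ofReal (α k)

namespace IsSplitting

variable {ν : Measure X} {α : ι → ℝ} {ρ : ι → Measure X}

lemma isFiniteMeasure (h : IsSplitting ν α ρ) (k : ι) : IsFiniteMeasure (ρ k) :=
  ⟨by rw [h.apply_univ]; exact ENNReal.ofReal_lt_top⟩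

lemma finset_sum {κ : Type*} [Fintype κ] {ν : κ → Measure X} {α : κ → ι → ℝ}
    {ρ : κ → ι → Measure X} (h : ∀ P, IsSplitting (ν P) (α P) (ρ P))
    (hα : ∀ P k, 0 ≤ α P k) :
    IsSplitting (∑ P, ν P) (fun k => ∑ P, α P k) (fun k => ∑ P, ρ P k) where
  sum_eq := by rw [sum_comm]; exact sum_congr rfl fun P _ => (h P).sum_eq
  apply_univ k := by
    rw [Measure.finsetSum_apply, ENNReal.ofReal_sum_of_nonneg fun P _ => hα P k]
    exact sum_congr rfl fun P _ => (h P).apply_univ k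

end IsSplitting

lemma isSplitting_smul_self (m : Measure X) [IsFiniteMeasure m] {w : ι → ℝ} (hw : ∀ k, 0 ≤ w k)
    (hsum : ∑ k, w k = m.real Set.univ) :
    IsSplitting m w fun k => ENNReal.ofReal (w k / m.real Set.univ) • m := by
  rcases eq_or_ne m 0 with rfl | hm
  · have hw0 : ∀ k, w k = 0 := fun k =>
      (sum_eq_zero_iff_of_nonneg fun k _ => hw k).1 (by simpa using hsum) k (mem_univ k)
    exact ⟨by simp, fun k => by simp [hw0 k]⟩
  have hpos : 0 < m.real Set.univ := by
    rw [measureReal_def, ENNReal.toReal_pos_iff]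
    exact ⟨Measure.measure_univ_pos.2 hm, measure_lt_top m _⟩
  constructor
  · rw [← sum_smul, ← ENNReal.ofReal_sum_of_nonneg fun k _ => div_nonneg (hw k) hpos.le,
      ← sum_div, hsum, div_self hpos.ne', ENNReal.ofReal_one, one_smul]
  · intro k
    rw [Measure.smul_apply, smul_eq_mul, ← ofReal_measureReal (measure_ne_top m _),
      ← ENNReal.ofReal_mul (div_nonneg (hw k) hpos.le), div_mul_cancel₀ _ hpos.ne']

section Venn

variable {A : ι → Set X}

def vennAtom (A : ι → Set X) (P : Finset ι) : Set X := {x | ∀ k, x ∈ A k ↔ k ∈ P}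

omit [MeasurableSpace X] [Fintype ι] in
lemma vennAtom_subset {P : Finset ι} {k : ι} (hk : k ∈ P) : vennAtom A P ⊆ A k :=
  fun _ hx => (hx k).2 hk

omit [MeasurableSpace X] in
lemma exists_mem_vennAtom (x : X) : ∃ P, x ∈ vennAtom A P := by
  classical
  exact ⟨univ.filter (x ∈ A ·), fun k => by simp⟩

omit [MeasurableSpace X] [Fintype ι] in
lemma pairwise_disjoint_vennAtom : Pairwise (Function.onFun Disjoint (vennAtom A)) := by
  refine fun P Q hPQ => Set.disjoint_left.2 fun x hP hQ => hPQ ?_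
  ext k; rw [← hP k, hQ k]

lemma measurableSet_vennAtom (hA : ∀ k, MeasurableSet (A k)) (P : Finset ι) :
    MeasurableSet (vennAtom A P) := by
  simp only [vennAtom, Set.ofPred_forall]
  refine .iInter fun k => ?_
  by_cases hk : k ∈ P
  · convert hA k using 1; ext; simp [hk]
  · convert (hA k).compl using 1; ext; simp [hk]

omit [MeasurableSpace X] in
lemma iUnion_vennAtom : ⋃ P, vennAtom A P = Set.univ :=
  Set.iUnion_eq_univ_iff.2 exists_mem_vennAtom

lemma sum_restrict_vennAtom (hA : ∀ k, MeasurableSet (A k)) (ν : Measure X) :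
    ∑ P, ν.restrict (vennAtom A P) = ν := by
  rw [← Measure.sum_fintype, ← Measure.restrict_iUnion pairwise_disjoint_vennAtom
    (measurableSet_vennAtom hA), iUnion_vennAtom,
    Measure.restrict_univ]

omit [MeasurableSpace X] in
lemma biUnion_subset_biUnion_vennAtom {I : Finset ι} {Q : Finset (Finset ι)}
    (hIQ : ∀ P k, k ∈ I → k ∈ P → P ∈ Q) : ⋃ k ∈ I, A k ⊆ ⋃ P ∈ Q, vennAtom A P := by
  intro x hx
  obtain ⟨k, hk, hxk⟩ := Set.mem_iUnion₂.1 hx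
  obtain ⟨P, hP⟩ := exists_mem_vennAtom (A := A) x
  exact Set.mem_biUnion (hIQ P k hk ((hP k).1 hxk)) hP

end Venn

theorem exists_isSplitting_of_hall {A : ι → Set X} (hA : ∀ k, MeasurableSet (A k))
    (ν : Measure X) [IsFiniteMeasure ν] {α : ι → ℝ} (hα : ∀ k, 0 ≤ α k)
    (htot : ∑ k, α k = ν.real Set.univ)
    (hall : ∀ I : Finset ι, ∑ k ∈ I, α k ≤ ν.real (⋃ k ∈ I, A k)) :
    ∃ ρ : ι → Measure X, IsSplitting ν α ρ ∧ ∀ k, ρ k (A k)ᶜ = 0 := by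
  classical
  set s : Finset ι → ℝ := fun P => ν.real (vennAtom A P)
  have hsum_s : ∀ Q : Finset (Finset ι), ∑ P ∈ Q, s P = ν.real (⋃ P ∈ Q, vennAtom A P) :=
    fun Q => (measureReal_biUnion_finset (pairwise_disjoint_vennAtom.set_pairwise _)
      fun P _ => measurableSet_vennAtom hA P).symm
  have htot_s : ∑ P, s P = ∑ k, α k := by
    rw [htot, hsum_s]; simp only [mem_univ, Set.iUnion_true, iUnion_vennAtom]
  obtain ⟨f, hf0, hfE, hrow, hcol⟩ := exists_transport_of_hall (fun P k => k ∈ P)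
    (fun P => measureReal_nonneg) hα htot_s fun I Q hIQ => (hall I).trans <| (hsum_s Q).symm ▸
      measureReal_mono (biUnion_subset_biUnion_vennAtom hIQ) (measure_ne_top _ _)
  have hpiece : ∀ P, IsSplitting (ν.restrict (vennAtom A P)) (f P)
      fun k => ENNReal.ofReal (f P k / s P) • ν.restrict (vennAtom A P) := fun P => by
    simpa only [measureReal_restrict_apply_univ] using isSplitting_smul_self
      (ν.restrict (vennAtom A P)) (hf0 P) (by rw [hrow P, measureReal_restrict_apply_univ])
  have hsplit := IsSplitting.finset_sum hpiece hf0
  simp only [sum_restrict_vennAtom hA, hcol] at hsplit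
  refine ⟨_, hsplit, fun k => ?_⟩
  rw [Measure.finsetSum_apply]
  refine sum_eq_zero fun P _ => ?_
  by_cases hk : k ∈ P
  · rw [Measure.smul_apply, Measure.restrict_apply (hA k).compl,
      measure_mono_null (Set.inter_subset_inter_right _ (vennAtom_subset hk)) (by simp), smul_zero]
  · rw [hfE P k hk, zero_div, ENNReal.ofReal_zero, zero_smul, Measure.coe_zero, Pi.zero_apply]

end Splitting

section Coupling

variable {X ι : Type*} [MeasurableSpace X] [Fintype ι]

lemma eq_prod_dirac_of_ae_snd_eq {Y : Type*} [MeasurableSpace Y] {m : Measure (X × Y)}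
    [IsFiniteMeasure m] {b : Y} (h : ∀ᵐ p ∂m, p.2 = b) :
    m = (m.map Prod.fst).prod (Measure.dirac b) := by
  rw [Measure.prod_dirac, Measure.map_map measurable_prodMk_right measurable_fst]
  conv_lhs => rw [← Measure.map_id (μ := m)]
  exact Measure.map_congr (h.mono fun p hp => (Prod.ext rfl hp : p = (p.1, b)))

lemma integral_prod_dirac {Y : Type*} [MeasurableSpace Y] (m : Measure X) [SFinite m] (b : Y)
    {f : X × Y → ℝ} (hf : AEStronglyMeasurable f (m.prod (Measure.dirac b))) :
    ∫ p, f p ∂(m.prod (Measure.dirac b)) = ∫ x, f (x, b) ∂m := by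
  rw [Measure.prod_dirac] at hf ⊢
  exact integral_map measurable_prodMk_right.aemeasurable hf

lemma MeasureTheory.Measure.restrict_finsetSum (m : ι → Measure X) {s : Set X}
    (hs : MeasurableSet s) : (∑ k, m k).restrict s = ∑ k, (m k).restrict s := by
  rw [← Measure.sum_fintype, Measure.restrict_sum _ hs, Measure.sum_fintype]

variable {ν : Measure X} {α : ι → ℝ} {ρ : ι → Measure X}

lemma IsSplitting.isCoupling (h : IsSplitting ν α ρ) (y : ι → X) :
    IsCoupling (∑ k, (ρ k).prod (Measure.dirac (y k))) ν
      (∑ k, ENNReal.ofReal (α k) • Measure.dirac (y k)) := by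
  have := h.isFiniteMeasure
  refine ⟨?_, ?_⟩
  · rw [Measure.map_finset_sum' measurable_fst.aemeasurable, ← h.sum_eq]
    simp
  · rw [Measure.map_finset_sum' measurable_snd.aemeasurable]
    simp [h.apply_univ]

lemma IsSplitting.restrict_sum_prod_dirac (h : IsSplitting ν α ρ) (y : ι → X) {S : Set X}
    (hS : MeasurableSet S) {j : ι} (hSj : ∀ k ≠ j, ρ k S = 0) :
    (∑ k, (ρ k).prod (Measure.dirac (y k))).restrict (S ×ˢ Set.univ) =
      (ν.restrict S).prod (Measure.dirac (y j)) := by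
  have hρS : ∀ k ≠ j, (ρ k).restrict S = 0 := fun k hk => Measure.restrict_eq_zero.2 (hSj k hk)
  have hνS : ν.restrict S = (ρ j).restrict S := by
    rw [← h.sum_eq, Measure.restrict_finsetSum _ hS,
      sum_eq_single j (fun k _ hk => hρS k hk) (by simp)]
  have := h.isFiniteMeasure
  rw [Measure.restrict_finsetSum _ (hS.prod .univ), sum_eq_single j, hνS,
    Measure.restrict_prod_eq_prod_univ]
  · intro k _ hk
    rw [← Measure.restrict_prod_eq_prod_univ, hρS k hk, Measure.zero_prod]
  · simp

lemma IsCoupling.exists_isSplitting [MeasurableSingletonClass X] {π : Measure (X × X)}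
    {y : ι → X} (hy : Function.Injective y)
    (hπ : IsCoupling π ν (∑ k, ENNReal.ofReal (α k) • Measure.dirac (y k))) :
    ∃ ρ, IsSplitting ν α ρ ∧ π = ∑ k, (ρ k).prod (Measure.dirac (y k)) := by
  have hmeas : ∀ k, MeasurableSet (Prod.snd ⁻¹' {y k} : Set (X × X)) :=
    fun k => measurable_snd (measurableSet_singleton _)
  have hfiber : ∀ k, π (Prod.snd ⁻¹' {y k}) = ENNReal.ofReal (α k) := fun k => by
    rw [← Measure.map_apply measurable_snd (measurableSet_singleton _), hπ.2,
      Measure.finsetSum_apply, sum_eq_single k (fun i _ hik => by simp [hy.ne hik]) (by simp)]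
    simp
  have : ∀ k, IsFiniteMeasure (π.restrict (Prod.snd ⁻¹' {y k})) := fun k =>
    ⟨by rw [Measure.restrict_apply_univ, hfiber k]; exact ENNReal.ofReal_lt_top⟩
  have hsum : ∑ k, π.restrict (Prod.snd ⁻¹' {y k}) = π := by
    rw [← Measure.sum_fintype, ← Measure.restrict_iUnion
      (fun i k hik => (Set.disjoint_singleton.2 (hy.ne hik)).preimage _) hmeas]
    refine Measure.restrict_eq_self_of_ae_mem ?_
    rw [← Set.preimage_iUnion]
    refine ae_of_ae_map (p := (· ∈ ⋃ i, {y i})) measurable_snd.aemeasurable ?_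
    rw [hπ.2, ae_finsetSum_measure_iff]
    exact fun k _ => Measure.ae_smul_measure ((ae_dirac_iff (MeasurableSet.iUnion fun i =>
      measurableSet_singleton _)).2 (Set.mem_iUnion_of_mem k rfl)) _
  refine ⟨fun k => (π.restrict (Prod.snd ⁻¹' {y k})).map Prod.fst, ⟨?_, fun k => ?_⟩, ?_⟩
  · rw [← Measure.map_finset_sum' measurable_fst.aemeasurable, hsum, hπ.1]
  · rw [Measure.map_apply measurable_fst .univ, Set.preimage_univ, Measure.restrict_apply_univ,
      hfiber]
  · conv_lhs => rw [← hsum]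
    exact sum_congr rfl fun k _ => eq_prod_dirac_of_ae_snd_eq (ae_restrict_mem (hmeas k))

end Coupling

section Cost

variable {X : Type*} [MetricSpace X] [CompactSpace X] [MeasurableSpace X] [BorelSpace X]
  {n : ℕ} [NeZero n] {y : Fin n → X} {ψ α : Fin n → ℝ} {ν : Measure X} {ρ : Fin n → Measure X}

lemma integral_lagGap_eq_zero_iff (m : Measure X) [IsFiniteMeasure m] (k : Fin n) :
    ∫ x, lagGap y ψ k x ∂m = 0 ↔ m (Lag y ψ k)ᶜ = 0 := by
  rw [integral_eq_zero_iff_of_nonneg (fun x => lagGap_nonneg k x)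
    ((continuous_lagGap k).integrable_of_compactSpace m), EventuallyEq, ae_iff]
  simp only [Pi.zero_apply, lagGap_eq_zero_iff]
  rfl

lemma IsSplitting.integral_dist_sq_eq (h : IsSplitting ν α ρ) (hα : ∀ k, 0 ≤ α k) :
    ∫ p, dist p.1 p.2 ^ 2 ∂(∑ k, (ρ k).prod (Measure.dirac (y k))) =
      dualFun y α ν ψ + ∑ k, ∫ x, lagGap y ψ k x ∂(ρ k) := by
  have := h.isFiniteMeasure
  have hcost : Continuous fun p : X × X => dist p.1 p.2 ^ 2 := by fun_prop
  have hψc : ∀ m : Measure X, [IsFiniteMeasure m] → Integrable (psiC y ψ) m :=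
    fun m _ => continuous_psiC.integrable_of_compactSpace m
  have hk : ∀ k, ∫ p, dist p.1 p.2 ^ 2 ∂((ρ k).prod (Measure.dirac (y k))) =
      ∫ x, psiC y ψ x ∂(ρ k) + α k * ψ k + ∫ x, lagGap y ψ k x ∂(ρ k) := fun k => by
    have hsplit : (fun x => dist x (y k) ^ 2) = fun x => psiC y ψ x + ψ k + lagGap y ψ k x := by
      funext x; rw [lagGap]; ring
    have hint : Integrable (fun x => psiC y ψ x + ψ k) (ρ k) := (hψc _).add (integrable_const _)
    rw [integral_prod_dirac _ _ hcost.aestronglyMeasurable, hsplit,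
      integral_add hint ((continuous_lagGap k).integrable_of_compactSpace _),
      integral_add (hψc _) (integrable_const _), integral_const, smul_eq_mul,
      measureReal_def, h.apply_univ, ENNReal.toReal_ofReal (hα k)]
  rw [integral_finsetSum_measure fun k _ => hcost.integrable_of_compactSpace _]
  simp only [hk, sum_add_distrib, dualFun, ← h.sum_eq]
  rw [integral_finsetSum_measure fun k _ => hψc _]

lemma IsSplitting.integral_dist_sq_eq_dualFun (h : IsSplitting ν α ρ) (hα : ∀ k, 0 ≤ α k)
    (hρ : ∀ k, ρ k (Lag y ψ k)ᶜ = 0) :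
    ∫ p, dist p.1 p.2 ^ 2 ∂(∑ k, (ρ k).prod (Measure.dirac (y k))) = dualFun y α ν ψ := by
  have := h.isFiniteMeasure
  rw [h.integral_dist_sq_eq hα,
    sum_eq_zero fun k _ => (integral_lagGap_eq_zero_iff _ k).2 (hρ k), add_zero]

lemma IsSplitting.measure_compl_Lag_eq_zero (h : IsSplitting ν α ρ) (hα : ∀ k, 0 ≤ α k)
    (hle : ∫ p, dist p.1 p.2 ^ 2 ∂(∑ k, (ρ k).prod (Measure.dirac (y k))) ≤ dualFun y α ν ψ)
    (k : Fin n) : ρ k (Lag y ψ k)ᶜ = 0 := by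
  have := h.isFiniteMeasure
  have hgap : ∀ k, 0 ≤ ∫ x, lagGap y ψ k x ∂(ρ k) := fun k => integral_nonneg (lagGap_nonneg k)
  rw [h.integral_dist_sq_eq hα] at hle
  refine (integral_lagGap_eq_zero_iff _ k).1 <| (sum_eq_zero_iff_of_nonneg fun k _ => hgap k).1
    (le_antisymm (by linarith) (sum_nonneg fun k _ => hgap k)) k (mem_univ k)

end Cost

/-- On the interior of a Laguerre cell, an optimal semi-discrete coupling is the
product of the restricted source measure with the Dirac mass at the cell's atom;
consequently the restricted transport cost is an integral against `ν`. -/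
theorem stmt5 {X : Type*} [MetricSpace X] [CompactSpace X]
    [MeasurableSpace X] [BorelSpace X]
    (n : ℕ) (hn : 0 < n) (y : Fin n → X) (hy : Function.Injective y)
    (α : Fin n → ℝ) (hα : ∀ j, 0 < α j) (hsum : ∑ j, α j = 1)
    (ν : Measure X) [IsProbabilityMeasure ν]
    (μ : Measure X) (hμ : μ = ∑ j, ENNReal.ofReal (α j) • Measure.dirac (y j))
    (ψ : Fin n → ℝ) (hmax : ∀ φ : Fin n → ℝ, dualFun y α ν φ ≤ dualFun y α ν ψ)
    (π : Measure (X × X)) (hopt : IsOptimalCoupling π ν μ) (j : Fin n) :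
    π.restrict ((Lag y ψ j \ TieSet y ψ j) ×ˢ (Set.univ : Set X)) =
      (ν.restrict (Lag y ψ j \ TieSet y ψ j)).prod (Measure.dirac (y j)) ∧
    (∫ p in (Lag y ψ j \ TieSet y ψ j) ×ˢ (Set.univ : Set X),
        dist p.1 p.2 ^ 2 ∂π) =
      ∫ x in Lag y ψ j \ TieSet y ψ j, dist x (y j) ^ 2 ∂ν := by
  have : NeZero n := ⟨hn.ne'⟩
  have hα0 : ∀ k, 0 ≤ α k := fun k => (hα k).le
  subst hμ
  obtain ⟨hcpl, hmin⟩ := hopt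
  obtain ⟨ρ, hρ, rfl⟩ := hcpl.exists_isSplitting hy
  obtain ⟨σ, hσ, hσLag⟩ := exists_isSplitting_of_hall (fun k => (isClosed_Lag k).measurableSet)
    ν hα0 (by simp [hsum]) (sum_le_measureReal_biUnion_Lag (ψ := ψ) hmax)
  have hρLag := hρ.measure_compl_Lag_eq_zero hα0
    ((hmin _ (hσ.isCoupling y)).trans (hσ.integral_dist_sq_eq_dualFun hα0 hσLag).le)
  have hrestrict := hρ.restrict_sum_prod_dirac y (measurableSet_Lag_diff_TieSet j)
    fun k hk => measure_mono_null (Lag_diff_TieSet_subset_compl_Lag hk) (hρLag k)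
  refine ⟨hrestrict, ?_⟩
  rw [hrestrict, integral_prod_dirac _ _ (by fun_prop : Continuous fun p : X × X =>
    dist p.1 p.2 ^ 2).aestronglyMeasurable]
end

section
/- Let (X,d) be a compact metric space and let y^1, …, y^n ∈ X be distinct. Choose δ > 0 such that the open balls B_δ(y^j) are pairwise disjoint, and let μ = (1/n) Σ_j δ_{y^j}. For a probability measure ν on X, for each j define ν_j := ν|_{B_δ(y^j)} / ν(B_δ(y^j)) (assuming ν(B_δ(y^j)) > 0) and ν̄ⁿ := ν_1 ⊗ ⋯ ⊗ ν_n on X^n. Then, with d_n(x, y)² = (1/n) Σ_j d(x^j, y^j)² on X^n and y = (y^1,…,y^n): ( ∫_{X^n} d_n(x, y) dν̄ⁿ(x) )² ≤ (1/n) Σ_{j=1}^n (1/ν(B_δ(y^j))) ∫_{B_δ(y^j)} d²(x, y^j) dν(x) ≤ α_ν · W₂²(ν, μ), where α_ν := 1 / ( n · min_j ν(B_δ(y^j)) ). -/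
open MeasureTheory

/-- The squared 2-Wasserstein distance as an infimum of transport costs. -/
noncomputable def W2sq {X : Type*} [MetricSpace X] [MeasurableSpace X]
    (ν μ : Measure X) : ℝ :=
  sInf {r : ℝ | ∃ π : Measure (X × X), IsCoupling π ν μ ∧
    r = ∫ p : X × X, dist p.1 p.2 ^ 2 ∂π}

/-- The empirical measure `(1/n) Σ_j δ_{y^j}`. -/
noncomputable def emp {Ω : Type*} [MeasurableSpace Ω] (n : ℕ)
    (x : Fin n → Ω) : Measure Ω :=
  (n : ENNReal)⁻¹ • ∑ j, Measure.dirac (x j)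

/-!
The first inequality is Jensen's inequality for the concave square root under the product
measure, whose `j`-th marginal is `ν` conditioned on `B_δ(y^j)`. For the second, take any coupling
`π` of `ν` and `μ`: almost surely its second coordinate is an atom, and on `B_δ(y^j)` the nearest
atom is `y^j`, so `∫_{B_δ(y^j)} d²(x, y^j) dν` is at most the cost of `π` on `B_δ(y^j) × X`.
Summing over the disjoint balls bounds `Σ_j ∫_{B_δ(y^j)} d²(x, y^j) dν` by `W₂²(ν, μ)`, and each
weight `1 / ν(B_δ(y^j))` is at most `1 / min_k ν(B_δ(y^k))`.
-/

open MeasureTheory ProbabilityTheory Metric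

lemma sq_integral_sqrt_le_integral {α : Type*} [MeasurableSpace α] {μ : Measure α}
    [IsProbabilityMeasure μ] {f : α → ℝ} (hf₀ : 0 ≤ f) (hf : Integrable f μ) :
    (∫ x, √(f x) ∂μ) ^ 2 ≤ ∫ x, f x ∂μ := by
  by_cases hsqrt : Integrable (fun x ↦ √(f x)) μ
  · have hjensen : ∫ x, √(f x) ∂μ ≤ √(∫ x, f x ∂μ) :=
      Real.strictConcaveOn_sqrt.concaveOn.le_map_integral Real.continuous_sqrt.continuousOn
        isClosed_Ici (ae_of_all _ hf₀) hf hsqrt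
    calc (∫ x, √(f x) ∂μ) ^ 2 ≤ √(∫ x, f x ∂μ) ^ 2 :=
          pow_le_pow_left₀ (integral_nonneg fun x ↦ Real.sqrt_nonneg _) hjensen 2
      _ = ∫ x, f x ∂μ := Real.sq_sqrt (integral_nonneg hf₀)
  · rw [integral_undef hsqrt]
    simpa using integral_nonneg hf₀

lemma sq_integral_sqrt_sum_dist_sq_pi_le {ι X : Type*} [Fintype ι] [MetricSpace X]
    [CompactSpace X] [MeasurableSpace X] [BorelSpace X] (μ : ι → Measure X)
    [∀ i, IsProbabilityMeasure (μ i)] (y : ι → X) {c : ℝ} (hc : 0 ≤ c) :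
    (∫ x : ι → X, √(c * ∑ i, dist (x i) (y i) ^ 2) ∂Measure.pi μ) ^ 2 ≤
      c * ∑ i, ∫ t, dist t (y i) ^ 2 ∂μ i := by
  have hint : ∀ i, Integrable (fun x : ι → X ↦ dist (x i) (y i) ^ 2) (Measure.pi μ) :=
    fun i ↦ (by fun_prop : Continuous _).integrable_of_hasCompactSupport (.of_compactSpace _)
  calc (∫ x : ι → X, √(c * ∑ i, dist (x i) (y i) ^ 2) ∂Measure.pi μ) ^ 2
      ≤ ∫ x : ι → X, c * ∑ i, dist (x i) (y i) ^ 2 ∂Measure.pi μ :=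
        sq_integral_sqrt_le_integral (fun x ↦ by positivity)
          ((integrable_finsetSum _ fun i _ ↦ hint i).const_mul c)
    _ = c * ∑ i, ∫ t, dist t (y i) ^ 2 ∂μ i := by
        rw [integral_const_mul, integral_finsetSum _ fun i _ ↦ hint i]
        congr 1
        exact Finset.sum_congr rfl fun i _ ↦
          integral_comp_eval (μ := μ)
            (by fun_prop : Continuous fun t ↦ dist t (y i) ^ 2).aestronglyMeasurable

section Coupling

variable {X : Type*} [MeasurableSpace X] {π : Measure (X × X)} {ν μ : Measure X}

lemma IsCoupling.isProbabilityMeasure [IsProbabilityMeasure ν] (h : IsCoupling π ν μ) :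
    IsProbabilityMeasure π := by
  rw [← Measure.isProbabilityMeasure_map_iff measurable_fst.aemeasurable, h.1]
  infer_instance

lemma isCoupling_prod (ν μ : Measure X) [IsProbabilityMeasure ν] [IsProbabilityMeasure μ] :
    IsCoupling (ν.prod μ) ν μ :=
  ⟨by simp, by simp⟩

lemma IsCoupling.ae_snd {p : X → Prop} (h : IsCoupling π ν μ) (hp : ∀ᵐ x ∂μ, p x) :
    ∀ᵐ q ∂π, p q.2 :=
  ae_of_ae_map measurable_snd.aemeasurable (by rwa [h.2])

lemma le_W2sq [MetricSpace X] {c : ℝ} (hne : ∃ π, IsCoupling π ν μ)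
    (h : ∀ π, IsCoupling π ν μ → c ≤ ∫ p, dist p.1 p.2 ^ 2 ∂π) : c ≤ W2sq ν μ := by
  obtain ⟨π, hπ⟩ := hne
  exact le_csInf ⟨_, π, hπ, rfl⟩ (by rintro r ⟨π', hπ', rfl⟩; exact h π' hπ')

end Coupling

section Empirical

variable {Ω : Type*} [MeasurableSpace Ω] {n : ℕ}

lemma isProbabilityMeasure_emp (hn : 0 < n) (x : Fin n → Ω) :
    IsProbabilityMeasure (emp n x) := by
  constructor
  simp only [emp, Measure.smul_apply, Measure.coe_finsetSum, Finset.sum_apply, measure_univ,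
    Finset.sum_const, Finset.card_univ, Fintype.card_fin, nsmul_eq_mul, mul_one, smul_eq_mul]
  exact ENNReal.inv_mul_cancel (by exact_mod_cast hn.ne') (ENNReal.natCast_ne_top n)

lemma ae_mem_range_emp [MeasurableSingletonClass Ω] (x : Fin n → Ω) :
    ∀ᵐ ω ∂emp n x, ω ∈ Set.range x := by
  simp [emp, ae_iff]

end Empirical

section NearestAtom

variable {ι X : Type*} [MetricSpace X] {y : ι → X} {δ : ℝ}

lemma dist_le_dist_of_mem_ball_of_pairwise_disjoint
    (hdisj : Pairwise fun i j ↦ Disjoint (ball (y i) δ) (ball (y j) δ)) {x : X} {j : ι}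
    (hx : x ∈ ball (y j) δ) (k : ι) : dist x (y j) ≤ dist x (y k) := by
  rcases eq_or_ne k j with rfl | hkj
  · exact le_rfl
  · have hxk : x ∉ ball (y k) δ := fun hxk ↦ (hdisj hkj).ne_of_mem hxk hx rfl
    exact (mem_ball.1 hx).le.trans (not_lt.1 hxk)

lemma sum_setIntegral_ball_le_integral [Fintype ι] [CompactSpace X] [MeasurableSpace X]
    [BorelSpace X] (hdisj : Pairwise fun i j ↦ Disjoint (ball (y i) δ) (ball (y j) δ))
    {π : Measure (X × X)} [IsFiniteMeasure π] (hsnd : ∀ᵐ p ∂π, p.2 ∈ Set.range y) :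
    ∑ j, ∫ x in ball (y j) δ, dist x (y j) ^ 2 ∂π.map Prod.fst ≤ ∫ p, dist p.1 p.2 ^ 2 ∂π := by
  set A : ι → Set (X × X) := fun j ↦ Prod.fst ⁻¹' ball (y j) δ
  have hA : ∀ j, MeasurableSet (A j) := fun j ↦ measurable_fst measurableSet_ball
  have hint : Integrable (fun p : X × X ↦ dist p.1 p.2 ^ 2) π :=
    (by fun_prop : Continuous _).integrable_of_hasCompactSupport (.of_compactSpace _)
  calc ∑ j, ∫ x in ball (y j) δ, dist x (y j) ^ 2 ∂π.map Prod.fst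
      = ∑ j, ∫ p in A j, dist p.1 (y j) ^ 2 ∂π :=
        Finset.sum_congr rfl fun j _ ↦ setIntegral_map measurableSet_ball
          (by fun_prop : Continuous _).aestronglyMeasurable measurable_fst.aemeasurable
    _ ≤ ∑ j, ∫ p in A j, dist p.1 p.2 ^ 2 ∂π := by
        refine Finset.sum_le_sum fun j _ ↦ setIntegral_mono_ae_restrict
          ((by fun_prop : Continuous _).integrable_of_hasCompactSupport (.of_compactSpace _))
          hint.integrableOn ((ae_restrict_iff' (hA j)).2 ?_)
        filter_upwards [hsnd] with p ⟨k, hk⟩ hp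
        rw [← hk]
        exact pow_le_pow_left₀ dist_nonneg
          (dist_le_dist_of_mem_ball_of_pairwise_disjoint hdisj hp k) 2
    _ = ∫ p in ⋃ j, A j, dist p.1 p.2 ^ 2 ∂π :=
        (integral_iUnion_fintype hA (fun i j hij ↦ (hdisj hij).preimage _)
          fun _ ↦ hint.integrableOn).symm
    _ ≤ ∫ p, dist p.1 p.2 ^ 2 ∂π :=
        setIntegral_le_integral hint (ae_of_all _ fun p ↦ by positivity)

end NearestAtom

lemma sum_setIntegral_ball_le_W2sq {X : Type*} [MetricSpace X] [CompactSpace X]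
    [MeasurableSpace X] [BorelSpace X] {n : ℕ} (hn : 0 < n) {y : Fin n → X} {δ : ℝ}
    (hdisj : Pairwise fun i j ↦ Disjoint (ball (y i) δ) (ball (y j) δ))
    (ν : Measure X) [IsProbabilityMeasure ν] :
    ∑ j, ∫ x in ball (y j) δ, dist x (y j) ^ 2 ∂ν ≤ W2sq ν (emp n y) := by
  have := isProbabilityMeasure_emp hn y
  refine le_W2sq ⟨_, isCoupling_prod ν (emp n y)⟩ fun π hπ ↦ ?_
  have := hπ.isProbabilityMeasure
  rw [← hπ.1]
  exact sum_setIntegral_ball_le_integral hdisj (hπ.ae_snd (ae_mem_range_emp y))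

lemma sum_one_div_mul_le_one_div_iInf_mul_sum {ι : Type*} [Fintype ι] {a b : ι → ℝ}
    (ha : ∀ j, 0 < a j) (hb : ∀ j, 0 ≤ b j) :
    ∑ j, 1 / a j * b j ≤ 1 / (⨅ j, a j) * ∑ j, b j := by
  rw [Finset.mul_sum]
  refine Finset.sum_le_sum fun j _ ↦ mul_le_mul_of_nonneg_right ?_ (hb j)
  have : Nonempty ι := ⟨j⟩
  obtain ⟨k, hk⟩ := exists_eq_ciInf_of_finite (f := a)
  exact one_div_le_one_div_of_le (hk ▸ ha k) (ciInf_le (Set.finite_range a).bddBelow j)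

theorem stmt17_general {X : Type*} [MetricSpace X] [CompactSpace X]
    [MeasurableSpace X] [BorelSpace X]
    (n : ℕ) (hn : 0 < n) (y : Fin n → X)
    (δ : ℝ)
    (hdisj : ∀ i j : Fin n, i ≠ j →
      Disjoint (Metric.ball (y i) δ) (Metric.ball (y j) δ))
    (ν : Measure X) [IsProbabilityMeasure ν]
    (hpos : ∀ j, 0 < ν (Metric.ball (y j) δ)) :
    (∫ x : Fin n → X,
        Real.sqrt ((1 / (n : ℝ)) * ∑ j, dist (x j) (y j) ^ 2)
        ∂(Measure.pi fun j =>
          (ν (Metric.ball (y j) δ))⁻¹ • ν.restrict (Metric.ball (y j) δ))) ^ 2 ≤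
      (1 / (n : ℝ)) * ∑ j, (1 / (ν (Metric.ball (y j) δ)).toReal) *
        ∫ x in Metric.ball (y j) δ, dist x (y j) ^ 2 ∂ν ∧
    (1 / (n : ℝ)) * ∑ j, (1 / (ν (Metric.ball (y j) δ)).toReal) *
        ∫ x in Metric.ball (y j) δ, dist x (y j) ^ 2 ∂ν ≤
      (1 / ((n : ℝ) * ⨅ j, (ν (Metric.ball (y j) δ)).toReal)) * W2sq ν (emp n y) := by
  have : ∀ j, IsProbabilityMeasure (ν[|ball (y j) δ]) :=
    fun j ↦ cond_isProbabilityMeasure (hpos j).ne'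
  have hcond : ∀ j, ∫ t, dist t (y j) ^ 2 ∂ν[|ball (y j) δ] =
      1 / (ν (ball (y j) δ)).toReal * ∫ x in ball (y j) δ, dist x (y j) ^ 2 ∂ν := fun j ↦ by
    rw [ProbabilityTheory.cond, integral_smul_measure, ENNReal.toReal_inv, smul_eq_mul, one_div]
  refine ⟨?_, ?_⟩
  · have hjensen := sq_integral_sqrt_sum_dist_sq_pi_le (fun j ↦ ν[|ball (y j) δ]) y
      (by positivity : 0 ≤ 1 / (n : ℝ))
    simp only [hcond] at hjensen
    exact hjensen
  · have hmass : ∀ j, 0 < (ν (ball (y j) δ)).toReal :=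
      fun j ↦ ENNReal.toReal_pos (hpos j).ne' (measure_ne_top ν _)
    calc (1 / (n : ℝ)) * ∑ j, 1 / (ν (ball (y j) δ)).toReal *
          ∫ x in ball (y j) δ, dist x (y j) ^ 2 ∂ν
        ≤ 1 / (n : ℝ) * (1 / (⨅ j, (ν (ball (y j) δ)).toReal) *
            ∑ j, ∫ x in ball (y j) δ, dist x (y j) ^ 2 ∂ν) := by
          gcongr
          exact sum_one_div_mul_le_one_div_iInf_mul_sum hmass
            fun j ↦ setIntegral_nonneg measurableSet_ball fun x _ ↦ by positivity
      _ ≤ 1 / (n : ℝ) * (1 / (⨅ j, (ν (ball (y j) δ)).toReal) * W2sq ν (emp n y)) := by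
          have hinf : 0 ≤ ⨅ j, (ν (ball (y j) δ)).toReal :=
            Real.iInf_nonneg fun j ↦ (hmass j).le
          gcongr
          exact sum_setIntegral_ball_le_W2sq hn (fun i j ↦ hdisj i j) ν
      _ = _ := by ring

/-- Quantitative estimate for the localized product measure built from a measure
close to the empirical measure `μ = (1/n) Σ_j δ_{y^j}`. -/
theorem stmt17 {X : Type*} [MetricSpace X] [CompactSpace X]
    [MeasurableSpace X] [BorelSpace X]
    (n : ℕ) (hn : 0 < n) (y : Fin n → X) (hy : Function.Injective y)
    (δ : ℝ) (hδ : 0 < δ)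
    (hdisj : ∀ i j : Fin n, i ≠ j →
      Disjoint (Metric.ball (y i) δ) (Metric.ball (y j) δ))
    (ν : Measure X) [IsProbabilityMeasure ν]
    (hpos : ∀ j, 0 < ν (Metric.ball (y j) δ)) :
    (∫ x : Fin n → X,
        Real.sqrt ((1 / (n : ℝ)) * ∑ j, dist (x j) (y j) ^ 2)
        ∂(Measure.pi fun j =>
          (ν (Metric.ball (y j) δ))⁻¹ • ν.restrict (Metric.ball (y j) δ))) ^ 2 ≤
      (1 / (n : ℝ)) * ∑ j, (1 / (ν (Metric.ball (y j) δ)).toReal) *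
        ∫ x in Metric.ball (y j) δ, dist x (y j) ^ 2 ∂ν ∧
    (1 / (n : ℝ)) * ∑ j, (1 / (ν (Metric.ball (y j) δ)).toReal) *
        ∫ x in Metric.ball (y j) δ, dist x (y j) ^ 2 ∂ν ≤
      (1 / ((n : ℝ) * ⨅ j, (ν (Metric.ball (y j) δ)).toReal)) * W2sq ν (emp n y) :=
  stmt17_general n hn y δ hdisj ν hpos
end
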